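/- arXiv:1506.04438 — 3 statements merged into one kernel-verified Lean document; each statement's English description precedes it below -/
import Mathlib

section
/- For any phylogenetic network N on X, the unfolding U(N), obtained from the path-tree U*(N) (whose vertices are the directed paths in N starting at the root, with an arc from π to πa for each arc a of N) by suppressing all vertices of in-degree one and out-degree one, is a multi-labelled tree (MUL-tree) on X. -/
/-! Basic framework: labelled rooted directed multigraphs, phylogenetic
networks, (pseudo) MUL-trees, unfolding, folding maps, etc. -/

structure Dgr (X : Type) : Type 1 where
  V : Type
  A : Type
  tl : A → V
  hd : A → V
  root : V
  lab : V → Option X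

namespace Dgr

variable {X : Type}

/-- There is an arc from `u` to `v`. -/
def arcRel (G : Dgr X) (u v : G.V) : Prop := ∃ a : G.A, G.tl a = u ∧ G.hd a = v

/-- `v` is reachable from `u` by a directed path (possibly trivial);
equivalently, `v` is below `u` or equal to it. -/
def Reaches (G : Dgr X) : G.V → G.V → Prop := Relation.ReflTransGen G.arcRel

noncomputable def indeg (G : Dgr X) (v : G.V) : ℕ := Nat.card {a : G.A // G.hd a = v}
noncomputable def outdeg (G : Dgr X) (v : G.V) : ℕ := Nat.card {a : G.A // G.tl a = v}

def IsLeaf (G : Dgr X) (v : G.V) : Prop := G.outdeg v = 0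

def Acyclic (G : Dgr X) : Prop := ∀ v, ¬ Relation.TransGen G.arcRel v v

/-- A finite rooted DAG: acyclic, the root has in-degree zero and every
vertex is reachable from the root. -/
def IsRootedDAG (G : Dgr X) : Prop :=
  Finite G.V ∧ Finite G.A ∧ G.Acyclic ∧ G.indeg G.root = 0 ∧ ∀ v, G.Reaches G.root v

/-- A tree vertex: in-degree one, out-degree zero (a leaf) or at least two. -/
def IsTreeVertex (G : Dgr X) (v : G.V) : Prop :=
  G.indeg v = 1 ∧ (G.outdeg v = 0 ∨ 2 ≤ G.outdeg v)

/-- A reticulation vertex: out-degree one and in-degree at least two. -/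
def IsRetVertex (G : Dgr X) (v : G.V) : Prop := G.outdeg v = 1 ∧ 2 ≤ G.indeg v

/-- An `X`-network: rooted DAG (multi-arcs allowed), root of out-degree ≥ 2,
every non-root vertex a tree vertex or a reticulation vertex, and the leaves
are labelled bijectively by `X`. -/
def IsXNetwork (G : Dgr X) : Prop :=
  G.IsRootedDAG ∧ 2 ≤ G.outdeg G.root ∧
  (∀ v, v ≠ G.root → G.IsTreeVertex v ∨ G.IsRetVertex v) ∧
  (∀ v, (∃ x, G.lab v = some x) ↔ G.IsLeaf v) ∧
  (∀ x : X, ∃! v, G.lab v = some x)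

def NoMultiArcs (G : Dgr X) : Prop :=
  ∀ a b : G.A, G.tl a = G.tl b → G.hd a = G.hd b → a = b

/-- A phylogenetic network on `X`: an `X`-network without multi-arcs. -/
def IsPhyloNetwork (G : Dgr X) : Prop := G.IsXNetwork ∧ G.NoMultiArcs

/-- A phylogenetic tree on `X`: a phylogenetic network with no reticulations. -/
def IsPhyloTree (G : Dgr X) : Prop := G.IsPhyloNetwork ∧ ∀ v, ¬ G.IsRetVertex v

/-- A pseudo MUL-tree on `X`: a finite rooted tree whose leaves are labelled
by elements of `X` (several leaves may share a label, every element of `X`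
is used, and exactly the leaves are labelled). -/
def IsPMulTree (G : Dgr X) : Prop :=
  G.IsRootedDAG ∧ (∀ v, v ≠ G.root → G.indeg v = 1) ∧
  (∀ v, (∃ x, G.lab v = some x) ↔ G.IsLeaf v) ∧
  (∀ x : X, ∃ v, G.lab v = some x)

/-- A MUL-tree: a pseudo MUL-tree with no in-degree-one out-degree-one vertex. -/
def IsMulTree (G : Dgr X) : Prop :=
  G.IsPMulTree ∧ ∀ v, ¬ (G.indeg v = 1 ∧ G.outdeg v = 1)

/-- Isomorphism of labelled rooted directed multigraphs. -/
def Iso (G H : Dgr X) : Prop :=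
  ∃ (φ : G.V ≃ H.V) (ψ : G.A ≃ H.A),
    (∀ a, H.tl (ψ a) = φ (G.tl a)) ∧ (∀ a, H.hd (ψ a) = φ (G.hd a)) ∧
    φ G.root = H.root ∧ (∀ v, H.lab (φ v) = G.lab v)

/-- The pendant subgraph rooted at `v` (everything below or equal to `v`). -/
def pendant (G : Dgr X) (v : G.V) : Dgr X where
  V := {w : G.V // G.Reaches v w}
  A := {a : G.A // G.Reaches v (G.tl a)}
  tl a := ⟨G.tl a.1, a.2⟩
  hd a := ⟨G.hd a.1, a.2.tail ⟨a.1, rfl, rfl⟩⟩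
  root := ⟨v, Relation.ReflTransGen.refl⟩
  lab w := G.lab w.1

/-- Directed paths in `G` starting at the root, ending at the index vertex. -/
inductive RPath (G : Dgr X) : G.V → Type
  | nil : RPath G G.root
  | cons {v : G.V} (p : RPath G v) (a : G.A) (h : G.tl a = v) : RPath G (G.hd a)

/-- The path-tree `U*(G)`: vertices are directed root-paths of `G`, arcs are
one-arc extensions, the label of a path is the label of its last vertex. -/
def Ustar (G : Dgr X) : Dgr X where
  V := Σ v : G.V, RPath G v
  A := Σ v : G.V, RPath G v × {a : G.A // G.tl a = v}
  tl x := ⟨x.1, x.2.1⟩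
  hd x := ⟨G.hd x.2.2.1, RPath.cons x.2.1 x.2.2.1 x.2.2.2⟩
  root := ⟨G.root, RPath.nil⟩
  lab x := G.lab x.1

/-- Vertices kept by the suppression operation (the root is always kept). -/
def Keep (G : Dgr X) (v : G.V) : Prop :=
  v = G.root ∨ ¬ (G.indeg v = 1 ∧ G.outdeg v = 1)

def startV (G : Dgr X) (l : List G.A) : G.V :=
  match l.head? with
  | some a => G.tl a
  | none => G.root

def endV (G : Dgr X) (l : List G.A) : G.V :=
  match l.getLast? with
  | some a => G.hd a
  | none => G.root

/-- `l` is a composable sequence of arcs. -/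
def IsChain (G : Dgr X) (l : List G.A) : Prop :=
  ∀ p a b s, l = p ++ a :: b :: s → G.hd a = G.tl b

/-- An arc of the suppression: a nonempty directed path between kept vertices
all of whose intermediate vertices are suppressed. -/
def IsSuppArc (G : Dgr X) (l : List G.A) : Prop :=
  l ≠ [] ∧ G.IsChain l ∧ G.Keep (G.startV l) ∧ G.Keep (G.endV l) ∧
  ∀ p a s, l = p ++ a :: s → s ≠ [] → ¬ G.Keep (G.hd a)

/-- Suppression of all in-degree-one out-degree-one vertices. -/
def suppress (G : Dgr X) : Dgr X where
  V := {v : G.V // G.Keep v}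
  A := {l : List G.A // G.IsSuppArc l}
  tl l := ⟨G.startV l.1, l.2.2.2.1⟩
  hd l := ⟨G.endV l.1, l.2.2.2.2.1⟩
  root := ⟨G.root, Or.inl rfl⟩
  lab v := G.lab v.1

/-- The unfolding `U(G)`: the path-tree with in-degree-one out-degree-one
vertices suppressed. -/
def U (G : Dgr X) : Dgr X := G.Ustar.suppress

/-- An `X`-morphism: maps on vertices and arcs commuting with heads and tails
and preserving the leaf-labelling by `X`. -/
structure Mor (G H : Dgr X) where
  fV : G.V → H.V
  fA : G.A → H.A
  tl_comm : ∀ a, H.tl (fA a) = fV (G.tl a)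
  hd_comm : ∀ a, H.hd (fA a) = fV (G.hd a)
  lab_pres : ∀ v x, G.lab v = some x → H.lab (fV v) = some x

def Mor.IsRooted {G H : Dgr X} (f : Mor G H) : Prop := f.fV G.root = H.root

/-- A folding map: a surjective `X`-morphism with the unique arc-lifting
property. -/
def Mor.IsFolding {G H : Dgr X} (f : Mor G H) : Prop :=
  Function.Surjective f.fV ∧ Function.Surjective f.fA ∧
  ∀ (a : H.A) (v : G.V), f.fV v = H.tl a →
    ∃! b : G.A, G.tl b = v ∧ f.fA b = a

/-- The canonical map `U*(G) → G` sending a root-path to its last vertex. -/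
def fstar (G : Dgr X) : Mor G.Ustar G where
  fV x := x.1
  fA x := x.2.2.1
  tl_comm a := a.2.2.2
  hd_comm _ := rfl
  lab_pres _ _ h := h

/-- `v` is an interior vertex of the arc-sequence `l`. -/
def IsInteriorOf (G : Dgr X) (l : List G.A) (v : G.V) : Prop :=
  ∃ p a s, l = p ++ a :: s ∧ s ≠ [] ∧ G.hd a = v

/-- `G'` is a subdivision of `G`. -/
def IsSubdivisionOf (G' G : Dgr X) : Prop :=
  ∃ (φ : G.V → G'.V) (ψ : G.A → List G'.A),
    Function.Injective φ ∧ φ G.root = G'.root ∧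
    (∀ v, G'.lab (φ v) = G.lab v) ∧
    (∀ a, ψ a ≠ [] ∧ G'.IsChain (ψ a) ∧ G'.startV (ψ a) = φ (G.tl a) ∧
      G'.endV (ψ a) = φ (G.hd a) ∧
      ∀ v, G'.IsInteriorOf (ψ a) v → v ∉ Set.range φ) ∧
    (∀ v' : G'.V, v' ∉ Set.range φ →
      G'.indeg v' = 1 ∧ G'.outdeg v' = 1 ∧ G'.lab v' = none) ∧
    (∀ a' : G'.A, ∃! a : G.A, a' ∈ ψ a)

/-- `H` is (isomorphic to) a subgraph of `G`. -/
def IsSubgraphOf (H G : Dgr X) : Prop :=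
  ∃ (φ : H.V → G.V) (ψ : H.A → G.A),
    Function.Injective φ ∧ Function.Injective ψ ∧
    (∀ a, G.tl (ψ a) = φ (H.tl a)) ∧ (∀ a, G.hd (ψ a) = φ (H.hd a)) ∧
    (∀ v, H.lab v = G.lab (φ v))

/-- `G` displays `T`: some subgraph of `G` is a subdivision of `T`. -/
def Displays (G T : Dgr X) : Prop :=
  ∃ H : Dgr X, IsSubgraphOf H G ∧ IsSubdivisionOf H T

/-- `T` is weakly displayed by `G`: `T` is displayed by the unfolding `U(G)`. -/
def WeaklyDisplays (G T : Dgr X) : Prop := Displays G.U T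

/-- `N` is (isomorphic to) the folding `F(T)` of the MUL-tree `T`: `N` is an
`X`-network obtained as the quotient of a subdivision `T'` of `T` by the
relation identifying vertices with isomorphic pendant subtrees, the quotient
map being a folding map whose fibres are exactly the classes of that relation. -/
def IsFoldingOf (N T : Dgr X) : Prop :=
  N.IsXNetwork ∧ ∃ T' : Dgr X, IsSubdivisionOf T' T ∧
    ∃ f : Mor T' N, f.IsFolding ∧
      ∀ u v : T'.V, f.fV u = f.fV v ↔ Iso (T'.pendant u) (T'.pendant v)

/-- `N` is stable: `F(U(N))` is isomorphic to `N`. -/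
def Stable (N : Dgr X) : Prop :=
  ∃ N' : Dgr X, IsFoldingOf N' N.U ∧ Iso N' N

/-- `T'` is the guide tree `T†` of the folding operation applied to `T`:
a subdivision of `T` whose quotient by the isomorphic-pendant-subtree
relation is an `X`-network via a folding map. -/
def IsDaggerOf (T' T : Dgr X) : Prop :=
  IsSubdivisionOf T' T ∧ ∃ (N : Dgr X) (f : Mor T' N), N.IsXNetwork ∧
    f.IsFolding ∧
    ∀ u v : T'.V, f.fV u = f.fV v ↔ Iso (T'.pendant u) (T'.pendant v)

/-- The child of every reticulation vertex is a tree vertex. -/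
def Compressed (N : Dgr X) : Prop :=
  ∀ a : N.A, N.IsRetVertex (N.tl a) → N.IsTreeVertex (N.hd a)

/-- Every (non-leaf) tree vertex has out-degree two. -/
def SemiResolved (N : Dgr X) : Prop :=
  ∀ v, N.indeg v = 1 → N.outdeg v = 0 ∨ N.outdeg v = 2

/-- Binary phylogenetic network. -/
def BinaryNet (N : Dgr X) : Prop :=
  N.outdeg N.root = 2 ∧ ∀ v, v ≠ N.root →
    (N.IsRetVertex v → N.indeg v = 2) ∧
    (N.indeg v = 1 → N.outdeg v = 0 ∨ N.outdeg v = 2)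

/-- Binary tree: every vertex has out-degree zero or two. -/
def BinaryTree (T : Dgr X) : Prop := ∀ v, T.outdeg v = 0 ∨ T.outdeg v = 2

/-- The set of children of a vertex. -/
def children (N : Dgr X) (v : N.V) : Set N.V := {w | ∃ a, N.tl a = v ∧ N.hd a = w}

/-- Tree-sibling network: every reticulation vertex has a sibling that is a
tree vertex. -/
def TreeSibling (N : Dgr X) : Prop :=
  ∀ v, N.IsRetVertex v → ∃ w, w ≠ v ∧ N.IsTreeVertex w ∧
    ∃ a b : N.A, N.tl a = N.tl b ∧ N.hd a = v ∧ N.hd b = w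

/-- The final vertex in `N` of (the path underlying) a vertex of `U(N)`. -/
def endOf (N : Dgr X) (p : N.U.V) : N.V := p.1.1

/-- Identifiable pair of tree vertices. -/
def Identifiable (N : Dgr X) (v w : N.V) : Prop :=
  v ≠ w ∧ N.IsTreeVertex v ∧ N.IsTreeVertex w ∧
  ∃ p q : N.U.V, N.endOf p = v ∧ N.endOf q = w ∧
    Iso (N.U.pendant p) (N.U.pendant q)

/-- Irreducible network: no identifiable pair of tree vertices. -/
def Irreducible (N : Dgr X) : Prop := ¬ ∃ v w, N.Identifiable v w

/-- The pendant subtree at `v` is inextendible: some other vertex carries an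
isomorphic pendant subtree. -/
def Inextendible (T : Dgr X) (v : T.V) : Prop :=
  ∃ v', v' ≠ v ∧ Iso (T.pendant v) (T.pendant v')

/-- A reconciliation map between a tree `T` and a network `N`. -/
structure Recon (T N : Dgr X) where
  r : T.V → N.V
  P : T.A → List N.A
  tree_or_root : ∀ v, r v = N.root ∨ N.IsTreeVertex (r v)
  leaf_fix : ∀ v x, T.lab v = some x → N.lab (r v) = some x
  chain : ∀ a, N.IsChain (P a)
  trivialP : ∀ a, P a = [] → r (T.tl a) = r (T.hd a)
  startP : ∀ a, P a ≠ [] → N.startV (P a) = r (T.tl a)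
  endP : ∀ a, P a ≠ [] → N.endV (P a) = r (T.hd a)

/-- Locally separated reconciliation: for any two distinct arcs of `T` with
the same tail, both associated paths are nonempty and have distinct initial
arcs. -/
def Recon.LocSep {T N : Dgr X} (ρ : Recon T N) : Prop :=
  ∀ a b : T.A, a ≠ b → T.tl a = T.tl b →
    ρ.P a ≠ [] ∧ ρ.P b ≠ [] ∧ (ρ.P a).head? ≠ (ρ.P b).head?

/-- The pendant subnetwork `N(u)`: restrict below `u` and suppress. -/
def Nsub (N : Dgr X) (u : N.V) : Dgr X := (N.pendant u).suppress

/-- The function `τ` of the dynamic program (as a proposition, `τ(v,u)=1`). -/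
def tau (T N : Dgr X) (v : T.V) (u : N.V) : Prop :=
  (T.IsLeaf v → ∀ x, T.lab v = some x →
     ∃ u' : N.V, N.lab u' = some x ∧ N.Reaches u u') ∧
  (¬ T.IsLeaf v → ∃ u' : N.V, (u' = N.root ∨ N.IsTreeVertex u') ∧
     N.Reaches u u' ∧ ∃ ρ : Recon (T.pendant v) (N.Nsub u'), ρ.LocSep)

/-- The result of `HangLeaves(v)` on the network `N` (new leaves are labelled
by the two new elements of `X ⊕ Fin 2`); vertices `inr 0, 1, 2, 3, 4` are
`x_v, x'_v, p_v, q_v, ρ_v` respectively. -/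
def HangN (N : Dgr X) (v : N.V) : Dgr (X ⊕ Fin 2) where
  V := N.V ⊕ Fin 5
  A := N.A ⊕ Fin 6
  tl := Sum.elim (fun a => Sum.inl (N.tl a))
    ![Sum.inr 4, Sum.inr 4, Sum.inr 2, Sum.inl v, Sum.inr 2, Sum.inr 3]
  hd := Sum.elim (fun a => Sum.inl (N.hd a))
    ![Sum.inl N.root, Sum.inr 2, Sum.inr 3, Sum.inr 3, Sum.inr 1, Sum.inr 0]
  root := Sum.inr 4
  lab := Sum.elim (fun w => (N.lab w).map Sum.inl)
    ![some (Sum.inr 0), some (Sum.inr 1), none, none, none]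

/-- The result of `HangLeaves` on the tree `T`; vertices `inr 0, 1, 2, 3` are
`x_v, x'_v, p_v, ρ_v` respectively. -/
def HangT (T : Dgr X) : Dgr (X ⊕ Fin 2) where
  V := T.V ⊕ Fin 4
  A := T.A ⊕ Fin 4
  tl := Sum.elim (fun a => Sum.inl (T.tl a))
    ![Sum.inr 3, Sum.inr 3, Sum.inr 2, Sum.inr 2]
  hd := Sum.elim (fun a => Sum.inl (T.hd a))
    ![Sum.inl T.root, Sum.inr 2, Sum.inr 0, Sum.inr 1]
  root := Sum.inr 3
  lab := Sum.elim (fun w => (T.lab w).map Sum.inl)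
    ![some (Sum.inr 0), some (Sum.inr 1), none, none]

end Dgr

/-!
`U*(N)` is a rooted tree: a root path is determined by its list of arcs, so dropping the last
arc gives the unique parent of a non-root path, and in an acyclic network these lists are
duplicate-free chains, so there are finitely many. A path is a leaf of `U*(N)` exactly when its
last vertex is a leaf of `N`, whose label it carries.

Suppression keeps a pseudo MUL-tree a tree. Walking up from a kept non-root vertex along the
unique arcs into it until the first kept vertex gives its only incoming suppression arc, and
walking down from an arc leaving a kept vertex along the unique arcs out of suppressed vertices
gives a suppression arc starting with it. Hence out-degree zero is preserved and out-degree at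
least two cannot drop, so no vertex of `U(N)` has in-degree one and out-degree one.
-/

theorem List.forall_of_concat_eq_append_cons_iff {α : Type*} {P : α → Prop} {l : List α}
    {a : α} :
    (∀ p b s, l ++ [a] = p ++ b :: s → s ≠ [] → P b) ↔ ∀ b ∈ l, P b := by
  constructor
  · intro h b hb
    obtain ⟨p, s, rfl⟩ := List.append_of_mem hb
    exact h p b (s ++ [a]) (by simp) (by simp)
  · intro h p b s hl hs
    obtain ⟨s₀, c, rfl⟩ := s.eq_nil_or_concat'.resolve_left hs
    have hl' : l ++ [a] = (p ++ b :: s₀) ++ [c] := by simpa using hl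
    obtain ⟨rfl, -⟩ := List.append_inj' hl' rfl
    exact h b (by simp)

theorem Relation.wellFounded_transGen_of_finite {α : Type*} [Finite α] {r : α → α → Prop}
    (h : ∀ a, ¬ TransGen r a a) : WellFounded (TransGen r) :=
  haveI : Std.Irrefl (TransGen r) := ⟨h⟩
  Finite.wellFounded_of_trans_of_irrefl _

namespace Dgr

variable {X : Type} {G : Dgr X}

theorem Acyclic.of_lift {β : Type*} {r : β → β → Prop} (hr : ∀ b, ¬ Relation.TransGen r b b)
    (f : G.V → β) (hf : ∀ u v, G.arcRel u v → Relation.TransGen r (f u) (f v)) : G.Acyclic :=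
  fun v hv => hr (f v) (hv.lift' f hf)

section Chain

theorem isChain_iff {l : List G.A} : G.IsChain l ↔ l.IsChain (fun a b => G.hd a = G.tl b) := by
  constructor
  · intro h
    induction l with
    | nil => exact .nil
    | cons a t ih =>
      refine List.IsChain.cons (ih fun p b c s hl => h (a :: p) b c s (by simp [hl])) ?_
      rintro b hb
      obtain ⟨s, rfl⟩ : ∃ s, t = b :: s := by
        cases t with
        | nil => simp at hb
        | cons c s => simp_all
      exact h [] a b s rfl
  · intro h p a b s hl
    exact (List.isChain_pair (R := fun a b => G.hd a = G.tl b)).mp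
      (h.infix ⟨p, s, by simp [hl]⟩)

theorem isChain_singleton (a : G.A) : G.IsChain [a] :=
  isChain_iff.mpr (List.isChain_singleton a)

theorem isChain_concat_concat {l : List G.A} {a b : G.A} :
    G.IsChain (l ++ [b, a]) ↔ G.IsChain (l ++ [b]) ∧ G.hd b = G.tl a := by
  rw [show l ++ [b, a] = (l ++ [b]) ++ [a] by simp, isChain_iff, isChain_iff,
    List.isChain_append]
  simp

theorem startV_cons (a : G.A) (t : List G.A) : G.startV (a :: t) = G.tl a := rfl

theorem startV_append {l r : List G.A} (h : l ≠ []) : G.startV (l ++ r) = G.startV l := by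
  cases l with
  | nil => exact absurd rfl h
  | cons a t => rfl

theorem startV_eq_tl_head {l : List G.A} (h : l ≠ []) : G.startV l = G.tl (l.head h) := by
  cases l with
  | nil => exact absurd rfl h
  | cons a t => rfl

theorem endV_concat (l : List G.A) (a : G.A) : G.endV (l ++ [a]) = G.hd a := by
  simp [endV]

theorem IsChain.transGen {l : List G.A} (hc : G.IsChain l) (h : l ≠ []) :
    Relation.TransGen G.arcRel (G.startV l) (G.endV l) := by
  induction l using List.reverseRecOn with
  | nil => exact absurd rfl h
  | append_singleton p a ih =>
    rw [endV_concat]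
    rcases p.eq_nil_or_concat' with rfl | ⟨q, b, rfl⟩
    · exact .single ⟨a, rfl, rfl⟩
    · obtain ⟨hc, hba⟩ := isChain_concat_concat.mp (by simpa using hc)
      have := ih hc (by simp)
      rw [endV_concat, hba] at this
      rw [startV_append (by simp)]
      exact this.tail ⟨a, rfl, rfl⟩

theorem IsChain.nodup (hAc : G.Acyclic) {l : List G.A} (hc : G.IsChain l) : l.Nodup := by
  let R : G.A → G.A → Prop := fun a b => G.arcRel (G.tl a) (G.tl b)
  have hR : l.IsChain (Relation.TransGen R) :=
    (isChain_iff.mp hc).imp fun a b h => .single ⟨a, rfl, h⟩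
  refine (List.isChain_iff_pairwise.mp hR).imp fun {a b} h hab => ?_
  subst hab
  exact hAc _ (h.lift' G.tl fun _ _ h => .single h)

end Chain

section PMulTree

theorem IsPMulTree.hd_ne_root (hG : G.IsPMulTree) (a : G.A) : G.hd a ≠ G.root := by
  obtain ⟨⟨-, hA, -, hroot, -⟩, -⟩ := hG
  exact fun h => (Finite.card_eq_zero_iff.mp hroot).false ⟨a, h⟩

theorem IsPMulTree.hd_injective (hG : G.IsPMulTree) : Function.Injective G.hd := by
  intro a b h
  have hsub : Subsingleton {c : G.A // G.hd c = G.hd a} :=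
    (Nat.card_eq_one_iff_unique.mp (hG.2.1 _ (hG.hd_ne_root a))).1
  exact congrArg Subtype.val (hsub.elim ⟨a, rfl⟩ ⟨b, h.symm⟩)

theorem IsPMulTree.exists_hd_eq (hG : G.IsPMulTree) {v : G.V} (hv : v ≠ G.root) :
    ∃ a, G.hd a = v := by
  obtain ⟨⟨a, ha⟩⟩ := (Nat.card_eq_one_iff_unique.mp (hG.2.1 v hv)).2
  exact ⟨a, ha⟩

end PMulTree

section SuppPath

theorem not_keep_iff {v : G.V} : ¬ G.Keep v ↔ v ≠ G.root ∧ G.indeg v = 1 ∧ G.outdeg v = 1 := by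
  simp [Keep]

def IsSuppPath (G : Dgr X) (l : List G.A) : Prop :=
  l ≠ [] ∧ G.IsChain l ∧ G.Keep (G.startV l) ∧
    ∀ p a s, l = p ++ a :: s → s ≠ [] → ¬ G.Keep (G.hd a)

theorem isSuppArc_iff {l : List G.A} : G.IsSuppArc l ↔ G.IsSuppPath l ∧ G.Keep (G.endV l) :=
  ⟨fun ⟨hne, hc, hs, he, hi⟩ => ⟨⟨hne, hc, hs, hi⟩, he⟩,
   fun ⟨⟨hne, hc, hs, hi⟩, he⟩ => ⟨hne, hc, hs, he, hi⟩⟩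

theorem isSuppPath_concat_iff {l : List G.A} {a : G.A} :
    G.IsSuppPath (l ++ [a]) ↔
      G.IsChain (l ++ [a]) ∧ G.Keep (G.startV (l ++ [a])) ∧ ∀ b ∈ l, ¬ G.Keep (G.hd b) := by
  simp [IsSuppPath, List.forall_of_concat_eq_append_cons_iff]

theorem isSuppPath_singleton {a : G.A} : G.IsSuppPath [a] ↔ G.Keep (G.tl a) := by
  simpa [isChain_singleton, startV_cons] using isSuppPath_concat_iff (l := []) (a := a)

theorem isSuppPath_concat_concat {l : List G.A} {a b : G.A} :
    G.IsSuppPath (l ++ [b, a]) ↔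
      G.IsSuppPath (l ++ [b]) ∧ G.hd b = G.tl a ∧ ¬ G.Keep (G.tl a) := by
  have hlba : l ++ [b, a] = (l ++ [b]) ++ [a] := by simp
  have hstart : G.startV (l ++ [b, a]) = G.startV (l ++ [b]) := by
    rw [hlba, startV_append (by simp)]
  rw [hlba, isSuppPath_concat_iff, isSuppPath_concat_iff, ← hlba, isChain_concat_concat, hstart]
  constructor
  · rintro ⟨⟨hc, hba⟩, hk, hi⟩
    simp only [List.mem_append, List.mem_singleton] at hi
    exact ⟨⟨hc, hk, fun c hc => hi c (.inl hc)⟩, hba, hba ▸ hi b (.inr rfl)⟩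
  · rintro ⟨⟨hc, hk, hi⟩, hba, hka⟩
    refine ⟨⟨hc, hba⟩, hk, ?_⟩
    simp only [List.mem_append, List.mem_singleton]
    rintro c (hc | rfl)
    exacts [hi c hc, hba ▸ hka]

theorem IsSuppPath.eq_of_endV_eq (hG : G.IsPMulTree) {l l' : List G.A} (hl : G.IsSuppPath l)
    (hl' : G.IsSuppPath l') (h : G.endV l = G.endV l') : l = l' := by
  induction l using List.reverseRecOn generalizing l' with
  | nil => exact absurd rfl hl.1
  | append_singleton p a ih =>
    obtain ⟨p', a', rfl⟩ := l'.eq_nil_or_concat'.resolve_left hl'.1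
    rw [endV_concat, endV_concat] at h
    obtain rfl := hG.hd_injective h
    rcases p.eq_nil_or_concat' with rfl | ⟨q, b, rfl⟩ <;>
      rcases p'.eq_nil_or_concat' with rfl | ⟨q', b', rfl⟩
    · rfl
    · simp only [List.append_assoc, List.cons_append, List.nil_append] at hl'
      exact absurd (isSuppPath_singleton.mp hl) (isSuppPath_concat_concat.mp hl').2.2
    · simp only [List.append_assoc, List.cons_append, List.nil_append] at hl
      exact absurd (isSuppPath_singleton.mp hl') (isSuppPath_concat_concat.mp hl).2.2
    · simp only [List.append_assoc, List.cons_append, List.nil_append] at hl hl'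
      obtain ⟨hq, hba, -⟩ := isSuppPath_concat_concat.mp hl
      obtain ⟨hq', hba', -⟩ := isSuppPath_concat_concat.mp hl'
      rw [ih hq hq' (by rw [endV_concat, endV_concat, hba, hba'])]

theorem IsPMulTree.exists_isSuppPath_endV_eq (hG : G.IsPMulTree) {v : G.V} (hv : v ≠ G.root) :
    ∃ l, G.IsSuppPath l ∧ G.endV l = v := by
  obtain ⟨⟨hV, -, hAc, -, -⟩, -⟩ := id hG
  induction v using (Relation.wellFounded_transGen_of_finite hAc).induction with
  | _ v ih =>
    obtain ⟨a, rfl⟩ := hG.exists_hd_eq hv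
    by_cases hk : G.Keep (G.tl a)
    · exact ⟨[a], isSuppPath_singleton.mpr hk, rfl⟩
    · have hne : G.tl a ≠ G.root := fun h => hk (h ▸ Or.inl rfl)
      obtain ⟨l, hl, hend⟩ := ih (G.tl a) (.single ⟨a, rfl, rfl⟩) hne
      obtain ⟨q, b, rfl⟩ := l.eq_nil_or_concat'.resolve_left hl.1
      rw [endV_concat] at hend
      refine ⟨q ++ [b, a], isSuppPath_concat_concat.mpr ⟨hl, hend, hk⟩, ?_⟩
      rw [show q ++ [b, a] = (q ++ [b]) ++ [a] by simp, endV_concat]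

theorem IsSuppPath.exists_isSuppArc_append [Finite G.V] (hAc : G.Acyclic) {l : List G.A}
    {a : G.A} (hl : G.IsSuppPath (l ++ [a])) : ∃ s, G.IsSuppArc (l ++ a :: s) := by
  have wf := Relation.wellFounded_transGen_of_finite (r := flip G.arcRel)
    fun v h => hAc v (Relation.transGen_swap.mp h)
  generalize hv : G.hd a = v
  induction v using wf.induction generalizing l a with
  | _ v ih =>
    by_cases hk : G.Keep v
    · exact ⟨[], isSuppArc_iff.mpr ⟨by simpa using hl, by rwa [endV_concat, hv]⟩⟩
    · obtain ⟨⟨c, hc⟩⟩ := (Nat.card_eq_one_iff_unique.mp (not_keep_iff.mp hk).2.2).2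
      have hlc : G.IsSuppPath ((l ++ [a]) ++ [c]) := by
        rw [List.append_assoc, List.singleton_append]
        exact isSuppPath_concat_concat.mpr ⟨hl, hv.trans hc.symm, by rwa [hc]⟩
      obtain ⟨s, hs⟩ := ih (G.hd c) (.single ⟨c, hc, rfl⟩) hlc rfl
      exact ⟨c :: s, by simpa using hs⟩

end SuppPath

section Suppress

theorem suppress_endV_injective (hG : G.IsPMulTree) :
    Function.Injective fun l : G.suppress.A => G.endV l.1 := fun l m h =>
  Subtype.ext ((isSuppArc_iff.mp l.2).1.eq_of_endV_eq hG (isSuppArc_iff.mp m.2).1 h)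

theorem finite_suppress_A (hG : G.IsPMulTree) : Finite G.suppress.A :=
  have := hG.1.1
  Finite.of_injective _ (suppress_endV_injective hG)

theorem suppress_indeg_root (hG : G.IsPMulTree) : G.suppress.indeg G.suppress.root = 0 := by
  refine Nat.card_eq_zero.mpr (.inl ⟨fun ⟨l, hl⟩ => ?_⟩)
  obtain ⟨p, a, hpa⟩ := l.1.eq_nil_or_concat'.resolve_left l.2.1
  have h : G.endV l.1 = G.root := congrArg Subtype.val hl
  rw [hpa, endV_concat] at h
  exact hG.hd_ne_root a h

theorem suppress_indeg_eq_one (hG : G.IsPMulTree) {v : G.suppress.V}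
    (hv : v ≠ G.suppress.root) : G.suppress.indeg v = 1 := by
  obtain ⟨l, hl, hend⟩ := hG.exists_isSuppPath_endV_eq fun h => hv (Subtype.ext h)
  refine Nat.card_eq_one_iff_unique.mpr ⟨⟨fun l m => Subtype.ext ?_⟩, ?_⟩
  · exact suppress_endV_injective hG
      ((congrArg Subtype.val l.2).trans (congrArg Subtype.val m.2).symm)
  · exact ⟨⟨⟨l, isSuppArc_iff.mpr ⟨hl, hend ▸ v.2⟩⟩, Subtype.ext hend⟩⟩

theorem Acyclic.suppress (hAc : G.Acyclic) : G.suppress.Acyclic :=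
  Acyclic.of_lift hAc Subtype.val fun _ _ ⟨l, hu, hv⟩ => hu ▸ hv ▸ l.2.2.1.transGen l.2.1

theorem suppress_reaches (hG : G.IsPMulTree) (v : G.suppress.V) :
    G.suppress.Reaches G.suppress.root v := by
  obtain ⟨⟨hV, -, hAc, -, -⟩, -⟩ := id hG
  obtain ⟨v, hv⟩ := v
  induction v using (Relation.wellFounded_transGen_of_finite hAc).induction with
  | _ v ih =>
    by_cases hroot : v = G.root
    · subst hroot
      exact .refl
    · obtain ⟨l, hl, hend⟩ := hG.exists_isSuppPath_endV_eq hroot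
      have hreach := ih (G.startV l) (hend ▸ hl.2.1.transGen hl.1) hl.2.2.1
      exact hreach.tail ⟨⟨l, isSuppArc_iff.mpr ⟨hl, hend ▸ hv⟩⟩, rfl, Subtype.ext hend⟩

def suppressFirstArc {v : G.suppress.V} (l : {l : G.suppress.A // G.suppress.tl l = v}) :
    {a : G.A // G.tl a = v.1} :=
  ⟨l.1.1.head l.1.2.1, (startV_eq_tl_head l.1.2.1).symm.trans (congrArg Subtype.val l.2)⟩

theorem suppressFirstArc_surjective [Finite G.V] (hAc : G.Acyclic) (v : G.suppress.V) :
    Function.Surjective (suppressFirstArc (v := v)) := by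
  rintro ⟨a, ha⟩
  obtain ⟨s, hs⟩ := IsSuppPath.exists_isSuppArc_append hAc (l := [])
    (isSuppPath_singleton.mpr (ha ▸ v.2))
  exact ⟨⟨⟨a :: s, hs⟩, Subtype.ext (by rw [← ha]; rfl)⟩, rfl⟩

theorem outdeg_le_suppress_outdeg (hG : G.IsPMulTree) (v : G.suppress.V) :
    G.outdeg v.1 ≤ G.suppress.outdeg v :=
  have := hG.1.1
  have := finite_suppress_A hG
  Nat.card_le_card_of_surjective _ (suppressFirstArc_surjective hG.1.2.2.1 v)

theorem suppress_outdeg_eq_zero [Finite G.A] {v : G.suppress.V} (h : G.outdeg v.1 = 0) :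
    G.suppress.outdeg v = 0 :=
  have := Finite.card_eq_zero_iff.mp h
  Nat.card_eq_zero.mpr (.inl (Function.isEmpty suppressFirstArc))

theorem suppress_outdeg_eq_zero_iff (hG : G.IsPMulTree) {v : G.suppress.V} :
    G.suppress.outdeg v = 0 ↔ G.outdeg v.1 = 0 :=
  have := hG.1.2.1
  ⟨fun h => Nat.le_zero.mp (h ▸ outdeg_le_suppress_outdeg hG v), suppress_outdeg_eq_zero⟩

theorem IsPMulTree.suppress_isMulTree (hG : G.IsPMulTree) : G.suppress.IsMulTree := by
  obtain ⟨⟨hV, hA, hAc, -, -⟩, hindeg, hleaf, hlab⟩ := id hG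
  refine ⟨⟨⟨Subtype.finite, finite_suppress_A hG, hAc.suppress, suppress_indeg_root hG,
    suppress_reaches hG⟩, fun v hv => suppress_indeg_eq_one hG hv, fun v => ?_, fun x => ?_⟩,
    fun v ⟨hin, hout⟩ => ?_⟩
  · rw [IsLeaf, suppress_outdeg_eq_zero_iff hG]
    exact hleaf v.1
  · obtain ⟨v, hv⟩ := hlab x
    have h0 : G.outdeg v = 0 := (hleaf v).mp ⟨x, hv⟩
    exact ⟨⟨v, .inr fun h => by omega⟩, hv⟩
  · have hvr : v.1 ≠ G.root := fun h => by
      simp [show v = G.suppress.root from Subtype.ext h, suppress_indeg_root hG] at hin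
    have hne : G.outdeg v.1 ≠ 1 := fun h => v.2.resolve_left hvr ⟨hindeg _ hvr, h⟩
    have h0 : G.outdeg v.1 = 0 := by
      have := outdeg_le_suppress_outdeg hG v
      omega
    simp [suppress_outdeg_eq_zero h0] at hout

end Suppress

section Ustar

def RPath.toList : {v : G.V} → RPath G v → List G.A
  | _, .nil => []
  | _, .cons p a _ => p.toList ++ [a]

theorem RPath.isChain_toList : ∀ {v : G.V} (p : RPath G v), G.IsChain p.toList
  | _, .nil => isChain_iff.mpr .nil
  | _, .cons .nil a _ => isChain_singleton a
  | _, .cons (.cons p b hb) a ha => by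
    rw [toList, toList, List.append_assoc, List.singleton_append]
    exact isChain_concat_concat.mpr ⟨isChain_toList (.cons p b hb), ha.symm⟩

theorem RPath.toList_injective :
    Function.Injective fun x : (Σ v, RPath G v) => x.2.toList := by
  rintro ⟨v, p⟩ ⟨w, q⟩ h
  induction p generalizing w with
  | nil => cases q <;> simp_all [toList]
  | cons p a ha ih =>
    cases q with
    | nil => simp [toList] at h
    | cons q b hb =>
      obtain ⟨hpq, hab⟩ := List.append_inj' h rfl
      obtain rfl := List.singleton_inj.mp hab
      obtain ⟨rfl, rfl⟩ := Sigma.mk.inj_iff.mp (ih _ q hpq)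
      rfl

theorem ustar_hd_toList (x : G.Ustar.A) :
    (G.Ustar.hd x).2.toList = x.2.1.toList ++ [x.2.2.1] :=
  rfl

theorem ustar_arc_ext {x y : G.Ustar.A} (h : G.Ustar.tl x = G.Ustar.tl y)
    (ha : x.2.2.1 = y.2.2.1) : x = y := by
  obtain ⟨v, p, a, hav⟩ := x
  obtain ⟨w, q, b, hbw⟩ := y
  obtain ⟨rfl, h⟩ := Sigma.mk.inj_iff.mp h
  obtain rfl := eq_of_heq h
  obtain rfl : a = b := ha
  rfl

theorem ustar_hd_injective : Function.Injective G.Ustar.hd := fun x y h => by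
  obtain ⟨hxy, hab⟩ := List.append_inj' (congrArg (fun z : G.Ustar.V => z.2.toList) h) rfl
  exact ustar_arc_ext (RPath.toList_injective hxy) (List.singleton_inj.mp hab)

theorem ustar_hd_ne_root (x : G.Ustar.A) : G.Ustar.hd x ≠ G.Ustar.root := fun h => by
  simpa [ustar_hd_toList, Ustar, RPath.toList] using
    congrArg (fun z : G.Ustar.V => z.2.toList) h

theorem ustar_indeg_root : G.Ustar.indeg G.Ustar.root = 0 :=
  Nat.card_eq_zero.mpr (.inl ⟨fun x => ustar_hd_ne_root x.1 x.2⟩)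

theorem ustar_indeg_eq_one {w : G.Ustar.V} (hw : w ≠ G.Ustar.root) : G.Ustar.indeg w = 1 := by
  obtain ⟨v, q⟩ := w
  cases q with
  | nil => exact absurd rfl hw
  | cons p a ha =>
    refine Nat.card_eq_one_iff_unique.mpr ⟨⟨fun x y => ?_⟩, ⟨⟨⟨_, p, a, ha⟩, rfl⟩⟩⟩
    exact Subtype.ext (ustar_hd_injective (x.2.trans y.2.symm))

theorem ustar_outdeg (x : G.Ustar.V) : G.Ustar.outdeg x = G.outdeg x.1 := by
  refine Nat.card_eq_of_bijective (fun y => ⟨y.1.2.2.1, y.1.2.2.2.trans (congrArg Sigma.fst y.2)⟩)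
    ⟨fun y z h => ?_, fun a => ?_⟩
  · exact Subtype.ext (ustar_arc_ext (y.2.trans z.2.symm) (congrArg Subtype.val h))
  · exact ⟨⟨⟨x.1, x.2, a.1, a.2⟩, rfl⟩, rfl⟩

theorem ustar_acyclic : G.Ustar.Acyclic := by
  refine Acyclic.of_lift (r := (· < ·)) (fun n h => lt_irrefl n ?_) (fun x => x.2.toList.length) ?_
  · rwa [Relation.transGen_eq_self] at h
  · rintro _ _ ⟨x, rfl, rfl⟩
    exact .single (by simp [Ustar, RPath.toList])

theorem ustar_reaches (x : G.Ustar.V) : G.Ustar.Reaches G.Ustar.root x := by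
  obtain ⟨v, q⟩ := x
  induction q with
  | nil => exact .refl
  | cons p a ha ih => exact ih.tail ⟨⟨_, p, a, ha⟩, rfl, rfl⟩

theorem finite_ustar_V [Finite G.A] (hAc : G.Acyclic) : Finite G.Ustar.V :=
  have := Fintype.ofFinite G.A
  Finite.of_injective (fun x : G.Ustar.V => (⟨x.2.toList, x.2.isChain_toList.nodup hAc⟩ :
    {l : List G.A // l.Nodup})) fun _ _ h => RPath.toList_injective (congrArg Subtype.val h)

theorem finite_ustar_A [Finite G.A] (hAc : G.Acyclic) : Finite G.Ustar.A :=
  have := finite_ustar_V hAc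
  Finite.of_injective (fun x : G.Ustar.A => (G.Ustar.tl x, x.2.2.1))
    fun _ _ h => ustar_arc_ext (congrArg Prod.fst h) (congrArg Prod.snd h)

theorem nonempty_rPath {v : G.V} (h : G.Reaches G.root v) : Nonempty (RPath G v) := by
  induction h with
  | refl => exact ⟨.nil⟩
  | tail _ hvw ih =>
    obtain ⟨p⟩ := ih
    obtain ⟨a, ha, rfl⟩ := hvw
    exact ⟨.cons p a ha⟩

theorem IsXNetwork.ustar_isPMulTree (hG : G.IsXNetwork) : G.Ustar.IsPMulTree := by
  obtain ⟨⟨-, hA, hAc, -, hreach⟩, -, -, hleaf, hlab⟩ := hG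
  refine ⟨⟨finite_ustar_V hAc, finite_ustar_A hAc, ustar_acyclic, ustar_indeg_root,
    ustar_reaches⟩, fun _ => ustar_indeg_eq_one, fun x => ?_, fun x => ?_⟩
  · rw [IsLeaf, ustar_outdeg]
    exact hleaf x.1
  · obtain ⟨v, hv, -⟩ := hlab x
    obtain ⟨p⟩ := nonempty_rPath (hreach v)
    exact ⟨⟨v, p⟩, hv⟩

end Ustar

end Dgr

/-- For any phylogenetic network `N` on `X`, the unfolding
`U(N)`, obtained from the path-tree `U*(N)` by suppressing all in-degree-one
out-degree-one vertices, is a MUL-tree on `X`. -/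
theorem unfolding_is_MulTree (X : Type) (N : Dgr X) (hN : N.IsPhyloNetwork) :
    N.U.IsMulTree :=
  hN.1.ustar_isPMulTree.suppress_isMulTree
end

section
/- For any phylogenetic network N on X, the map f* : U*(N) → N sending each directed root-path π of N to its last vertex, and each arc of U*(N) to the corresponding arc of N, is a folding map. -/
/-- For any phylogenetic network `N` on `X`, the map
`f* : U*(N) → N` sending each directed root-path to its last vertex (and each
arc of `U*(N)` to the corresponding arc of `N`) is a folding map. -/
theorem fstar_is_folding (X : Type) (N : Dgr X) (hN : N.IsPhyloNetwork) :
    (Dgr.fstar N).IsFolding := by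
  have hreach : ∀ v : N.V, Nonempty (Dgr.RPath N v) := by
    intro v
    obtain ⟨⟨-, -, -, -, hr⟩, -, -⟩ := hN.1
    have h : N.Reaches N.root v := hr v
    induction h with
    | refl => exact ⟨Dgr.RPath.nil⟩
    | tail _ hbc ih =>
        obtain ⟨a, ha, ha'⟩ := hbc
        obtain ⟨p⟩ := ih
        exact ⟨ha' ▸ Dgr.RPath.cons p a ha⟩
  refine ⟨?_, ?_, ?_⟩
  · intro v
    obtain ⟨p⟩ := hreach v
    exact ⟨⟨v, p⟩, rfl⟩
  · intro a
    obtain ⟨p⟩ := hreach (N.tl a)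
    exact ⟨⟨N.tl a, p, ⟨a, rfl⟩⟩, rfl⟩
  · rintro a ⟨w, p⟩ hv
    dsimp [Dgr.fstar] at hv
    subst hv
    refine ⟨⟨N.tl a, p, ⟨a, rfl⟩⟩, ⟨rfl, rfl⟩, ?_⟩
    rintro ⟨u, q, b, hb⟩ ⟨h1, h2⟩
    dsimp [Dgr.Ustar, Dgr.fstar] at h1 h2
    subst h2
    cases h1
    rfl
end

section
/- Every folding map f : T → N from a pseudo MUL-tree T on X to a phylogenetic network N on X is a rooted X-morphism, i.e., f maps the root of T to the root of N. -/
/-- Every folding map from a pseudo MUL-tree on `X` to a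
phylogenetic network on `X` is a rooted `X`-morphism. -/
theorem folding_is_rooted (X : Type) (T N : Dgr X) (hT : T.IsPMulTree)
    (hN : N.IsPhyloNetwork) (f : Dgr.Mor T N) (hf : f.IsFolding) :
    f.IsRooted := by
  obtain ⟨v, hv⟩ := hf.1 N.root
  have hTA : Finite T.A := hT.1.2.1
  have hNA : Finite N.A := hN.1.1.2.1
  have hNroot : N.indeg N.root = 0 := hN.1.1.2.2.2.1
  -- no arc of N has head N.root
  have hfin : Finite {a : N.A // N.hd a = N.root} := Subtype.finite
  have hempty : IsEmpty {a : N.A // N.hd a = N.root} := by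
    rcases Nat.card_eq_zero.1 hNroot with h | h
    · exact h
    · exact absurd h (not_infinite_iff_finite.2 hfin)
  by_cases hvr : v = T.root
  · show f.fV T.root = N.root; rw [← hvr]; exact hv
  · -- v has indegree 1 in T, giving an arc into v, whose image has head N.root
    have h1 : T.indeg v = 1 := hT.2.1 v hvr
    have hne : Nonempty {a : T.A // T.hd a = v} := by
      have : 0 < Nat.card {a : T.A // T.hd a = v} := by
        unfold Dgr.indeg at h1; omega
      exact (Nat.card_pos_iff.1 this).1
    obtain ⟨⟨a, ha⟩⟩ := hne
    exact (hempty.false ⟨f.fA a, by rw [f.hd_comm, ha, hv]⟩).elim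
end
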